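/- For every real q with 1/√2 ≤ q < 1, there exists a sequence of signs (ε_i) ∈ {1,-1}^ℕ such that ε_{2k-1} + ε_{2k} = 0 for every k ≥ 1 and ∑_{i=1}^∞ ε_i q^i = 0. -/

import Mathlib

/-!
Take `r = q ^ 2 ∈ [1/2, 1)` and choose signs `δₖ` greedily, each one pushing the partial sum of
`∑ δₖ r ^ (k + 1)` towards zero. Since every term is at least half the previous one, the partial
sums after `n` steps stay within `r ^ n` of zero, so the series sums to `0`. Spreading each `δₖ`
over the pair of exponents `2k + 1, 2k + 2` as `(δₖ, -δₖ)` gives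
`∑ εᵢ qⁱ = (q⁻¹ - 1) ∑ δₖ r ^ (k + 1) = 0`.
-/

open Finset

noncomputable section

def signToward (x : ℝ) : ℝ := if x ≤ 0 then 1 else -1

lemma signToward_eq_one_or_neg_one (x : ℝ) : signToward x = 1 ∨ signToward x = -1 := by
  unfold signToward
  split_ifs <;> simp

lemma abs_add_signToward_mul_le {x t : ℝ} (hx : |x| ≤ 2 * t) :
    |x + signToward x * t| ≤ t := by
  rw [abs_le] at hx ⊢
  unfold signToward
  split_ifs <;> constructor <;> linarith

def greedySum (r : ℝ) : ℕ → ℝ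
  | 0 => 0
  | n + 1 => greedySum r n + signToward (greedySum r n) * r ^ (n + 1)

def greedySign (r : ℝ) (n : ℕ) : ℝ := signToward (greedySum r n)

lemma sum_range_greedySign_mul_pow (r : ℝ) (n : ℕ) :
    ∑ k ∈ range n, greedySign r k * r ^ (k + 1) = greedySum r n := by
  induction n with
  | zero => rfl
  | succ n ih => rw [sum_range_succ, ih]; rfl

lemma abs_greedySum_le {r : ℝ} (hr : 1 / 2 ≤ r) (n : ℕ) : |greedySum r n| ≤ r ^ n := by
  induction n with
  | zero => simp [greedySum]
  | succ n ih =>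
    have hr0 : 0 ≤ r := by linarith
    refine abs_add_signToward_mul_le (ih.trans ?_)
    rw [pow_succ]
    nlinarith [pow_nonneg hr0 n]

lemma hasSum_greedySign_mul_pow {r : ℝ} (hr : 1 / 2 ≤ r) (hr1 : r < 1) :
    HasSum (fun k ↦ greedySign r k * r ^ (k + 1)) 0 := by
  have hr0 : 0 ≤ r := by linarith
  have hsum : Summable (fun k ↦ greedySign r k * r ^ (k + 1)) := by
    refine ((summable_geometric_of_lt_one hr0 hr1).mul_left r).of_norm_bounded fun k ↦ ?_
    rw [norm_mul, norm_pow, Real.norm_of_nonneg hr0, pow_succ']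
    rcases signToward_eq_one_or_neg_one (greedySum r k) with h | h <;>
      simp [greedySign, h]
  rw [hsum.hasSum_iff_tendsto_nat]
  refine squeeze_zero_norm (fun n ↦ ?_) (tendsto_pow_atTop_nhds_zero_of_lt_one hr0 hr1)
  rw [sum_range_greedySign_mul_pow, Real.norm_eq_abs]
  exact abs_greedySum_le hr n

/-- `pairUp δ` is `δ₀, -δ₀, δ₁, -δ₁, …` from index `1` on. -/
def pairUp (δ : ℕ → ℝ) (i : ℕ) : ℝ := (-1) ^ (i + 1) * δ ((i - 1) / 2)

lemma pairUp_eq_one_or_neg_one {δ : ℕ → ℝ} (hδ : ∀ k, δ k = 1 ∨ δ k = -1) (i : ℕ) :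
    pairUp δ i = 1 ∨ pairUp δ i = -1 := by
  unfold pairUp
  rcases neg_one_pow_eq_or ℝ (i + 1) with h | h <;>
    rcases hδ ((i - 1) / 2) with h' | h' <;> simp [h, h']

lemma pairUp_two_mul_add_one (δ : ℕ → ℝ) (k : ℕ) : pairUp δ (2 * k + 1) = δ k := by
  have hidx : (2 * k + 1 - 1) / 2 = k := by omega
  have hsign : (-1 : ℝ) ^ (2 * k + 1 + 1) = 1 := Even.neg_one_pow ⟨k + 1, by ring⟩
  rw [pairUp, hidx, hsign, one_mul]

lemma pairUp_two_mul_add_two (δ : ℕ → ℝ) (k : ℕ) : pairUp δ (2 * k + 2) = -δ k := by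
  have hidx : (2 * k + 2 - 1) / 2 = k := by omega
  have hsign : (-1 : ℝ) ^ (2 * k + 2 + 1) = -1 := Odd.neg_one_pow ⟨k + 1, by ring⟩
  rw [pairUp, hidx, hsign, neg_one_mul]

lemma pairUp_two_mul_sub_one_add_pairUp_two_mul (δ : ℕ → ℝ) {k : ℕ} (hk : 1 ≤ k) :
    pairUp δ (2 * k - 1) + pairUp δ (2 * k) = 0 := by
  obtain ⟨j, rfl⟩ := Nat.exists_eq_add_of_le' hk
  rw [show 2 * (j + 1) - 1 = 2 * j + 1 by omega, show 2 * (j + 1) = 2 * j + 2 by ring,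
    pairUp_two_mul_add_one, pairUp_two_mul_add_two, add_neg_cancel]

lemma hasSum_pairUp_mul_pow {δ : ℕ → ℝ} {q a : ℝ} (hq : q ≠ 0)
    (h : HasSum (fun k ↦ δ k * (q ^ 2) ^ (k + 1)) a) :
    HasSum (fun i ↦ pairUp δ (i + 1) * q ^ (i + 1)) ((q⁻¹ - 1) * a) := by
  rw [sub_mul, one_mul]
  refine HasSum.even_add_odd ((h.mul_left q⁻¹).congr_fun fun k ↦ ?_)
    (h.neg.congr_fun fun k ↦ ?_)
  · rw [pairUp_two_mul_add_one]
    field_simp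
    ring
  · rw [pairUp_two_mul_add_two]
    ring

end

theorem boundedly_fair_division_exists (q : ℝ) (hq : 1 / Real.sqrt 2 ≤ q) (hq1 : q < 1) :
    ∃ ε : ℕ → ℝ, (∀ i, 1 ≤ i → ε i = 1 ∨ ε i = -1) ∧
      (∀ k : ℕ, 1 ≤ k → ε (2 * k - 1) + ε (2 * k) = 0) ∧
      ∑' i : ℕ, ε (i + 1) * q ^ (i + 1) = 0 := by
  have hq0 : 0 < q := lt_of_lt_of_le (by positivity) hq
  have hr : 1 / 2 ≤ q ^ 2 := by
    calc (1 / 2 : ℝ) = (1 / Real.sqrt 2) ^ 2 := by rw [div_pow, Real.sq_sqrt] <;> norm_num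
      _ ≤ q ^ 2 := pow_le_pow_left₀ (by positivity) hq 2
  have hr1 : q ^ 2 < 1 := pow_lt_one₀ hq0.le hq1 two_ne_zero
  have hsum := hasSum_pairUp_mul_pow hq0.ne' (hasSum_greedySign_mul_pow hr hr1)
  refine ⟨pairUp (greedySign (q ^ 2)), fun i _ ↦ ?_,
    fun k hk ↦ pairUp_two_mul_sub_one_add_pairUp_two_mul _ hk, ?_⟩
  · exact pairUp_eq_one_or_neg_one (fun k ↦ signToward_eq_one_or_neg_one _) i
  · rw [hsum.tsum_eq, mul_zero]
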